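/- Correctness of the slack-based reconfiguration scheme: suppose the baseline configuration r_max executes each action a_i within its budgeted time, i.e., τ(r_max, a_i) ≤ b_i for all i, and the scheme only allows a transition ⟨r, t_{i-1}⟩ →_{a_i} ⟨r', t_i⟩ with t_i = t_{i-1} + δ + τ(r', a_i) when d_i − t_{i-1} ≥ 2δ + τ(r', a_i) (for r' ≠ r_max), and otherwise executes a_i on r_max at cost t_i = t_{i-1} + δ_{r,r_max} + τ(r_max, a_i) where δ_{r,r} = 0 and δ_{r,r'} = δ otherwise. Then every execution path of this scheme starting from ⟨r_max, 0⟩ satisfies t_i ≤ d_i for all i (i.e., the scheme's transition system by-simulates the specification). -/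
import Mathlib


/-- correctness of the slack-based reconfiguration scheme of Pal
et al.  A step for action `i` either moves to some configuration `r' ≠ rmax`
when enough slack has been earned (guard `d i - t ≥ 2δ + τ r' (a i)`), paying
`δ` for reconfiguration, or else (re)configures to `rmax` paying `δ_{r,rmax}`.
Starting from `⟨rmax, 0⟩`, every execution path meets every deadline, provided
the baseline `rmax` executes each action within its budgeted time. -/
theorem scheme_correct {Conf A : Type*} [DecidableEq Conf]
    (rmax : Conf) (τ : Conf → A → ℝ) (hτ : ∀ r x, 0 ≤ τ r x)
    (δ : ℝ) (hδ : 0 ≤ δ)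
    (a : ℕ → A) (b : ℕ → ℝ) (hb : ∀ i, 0 ≤ b i)
    (hbase : ∀ i, τ rmax (a i) ≤ b i)
    (d : ℕ → ℝ) (hd : ∀ i, d i = ∑ j ∈ Finset.range (i + 1), b j)
    (c : ℕ → Conf) (t : ℕ → ℝ)
    (hc0 : c 0 = rmax) (ht0 : t 0 = 0)
    (hstep : ∀ i,
      (c (i + 1) ≠ rmax ∧ d i - t i ≥ 2 * δ + τ (c (i + 1)) (a i) ∧
        t (i + 1) = t i + δ + τ (c (i + 1)) (a i)) ∨
      (c (i + 1) = rmax ∧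
        t (i + 1) = t i + (if c i = rmax then 0 else δ) + τ rmax (a i))) :
    ∀ i, t (i + 1) ≤ d i := by
  have key : ∀ i, t i + (if c i = rmax then 0 else δ) ≤ ∑ j ∈ Finset.range i, b j := by
    intro i
    induction i with
    | zero => simp [ht0, hc0]
    | succ n ih =>
      rw [Finset.sum_range_succ]
      rcases hstep n with ⟨hne, hguard, heq⟩ | ⟨he, heq⟩
      · rw [heq, if_neg hne]
        have hdn : d n = ∑ j ∈ Finset.range n, b j + b n := by
          rw [hd n, Finset.sum_range_succ]
        nlinarith [hτ (c (n+1)) (a n)]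
      · rw [heq, if_pos he]
        have h1 : τ rmax (a n) ≤ b n := hbase n
        by_cases hcn : c n = rmax
        · rw [if_pos hcn] at *; linarith
        · rw [if_neg hcn] at *; linarith
  intro i
  have := key (i + 1)
  rw [hd i]
  by_cases h : c (i + 1) = rmax
  · rw [if_pos h] at this; linarith
  · rw [if_neg h] at this; linarith
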